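/- Given i.i.d. nonnegative random variables (or any exchangeable family) P_1,...,P_m and their order statistics P_{(1)} ≤ ... ≤ P_{(m)}, and constants 0 = c_0 ≤ c_1 ≤ ... ≤ c_m ≤ 1: for each j and each index i, the event {P_{(1)} ≤ c_1, ..., P_{(m)} ≤ c_m, c_{j-1} < P_i ≤ c_j} equals the event {Q_{(1)} ≤ c_1, ..., Q_{(j-1)} ≤ c_{j-1}, Q_{(j)} ≤ c_{j+1}, ..., Q_{(m-1)} ≤ c_m, c_{j-1} < P_i ≤ c_j}, where Q_{(1)} ≤ ... ≤ Q_{(m-1)} are the order statistics of the m−1 values {P_k : k ≠ i}. -/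

import Mathlib

/-!
The `k`-th order statistic is `≤ t` exactly when more than `k` of the values are `≤ t`, so both
events are conditions on the counts `#{a | P_a ≤ c_l}`. Removing `P_i` lowers such a count by one
precisely when `P_i ≤ c_l`, which, given `c_{j-1} < P_i ≤ c_j`, happens exactly for `l ≥ j`. The
two count conditions then agree, except that the left one also asks for `j - 1` other values
`≤ c_j`; this follows from the condition at `l = j - 1`.
-/

/-- Order statistics: `orderStat p k` is the (k+1)-st smallest of the values `p`. -/
noncomputable def orderStat {n : ℕ} (p : Fin n → ℝ) : Fin n → ℝ :=
  fun k => p (Tuple.sort p k)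

open Finset

theorem orderStat_le_iff {n : ℕ} (p : Fin n → ℝ) (k : Fin n) (t : ℝ) :
    orderStat p k ≤ t ↔ (k : ℕ) < #{a | p a ≤ t} := by
  rw [card_equiv (Tuple.sort p).symm (t := {a | p (Tuple.sort p a) ≤ t}) (by simp)]
  exact (Tuple.lt_card_le_iff_apply_le_of_monotone (Tuple.monotone_sort p)).symm

theorem Fin.card_filter_univ_succAbove {n : ℕ} (P : Fin (n + 1) → Prop) [DecidablePred P]
    (i : Fin (n + 1)) : #{a | P a} = #{a | P (i.succAbove a)} + if P i then 1 else 0 := by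
  simp only [card_filter, Fin.sum_univ_succAbove _ i, add_comm]

theorem Nat.forall_lt_add_ite_iff_forall_lt_skip {n j : ℕ} (hj1 : 1 ≤ j) (hjm : j ≤ n + 1)
    (g : ℕ → ℕ) (hg : ∀ a b : ℕ, a ≤ b → b ≤ n + 1 → g a ≤ g b) :
    (∀ k : Fin (n + 1), (k : ℕ) < g (k + 1) + if j ≤ (k : ℕ) + 1 then 1 else 0) ↔
      ∀ k : Fin n, (k : ℕ) < g (if (k : ℕ) + 1 < j then k + 1 else k + 2) := by
  constructor
  · intro h k
    have h₁ := h k.castSucc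
    have h₂ := h k.succ
    simp only [Fin.val_castSucc, Fin.val_succ, add_assoc, Nat.reduceAdd] at h₁ h₂
    split_ifs at h₁ h₂ ⊢ <;> omega
  · rintro h ⟨k, hk⟩
    dsimp only
    by_cases hkj : k + 1 < j
    · have h₁ := h ⟨k, by omega⟩
      simp only [hkj, if_true] at h₁
      omega
    obtain rfl | hk0 := Nat.eq_zero_or_pos k
    · simp only [if_pos (show j ≤ 0 + 1 by omega)]
      omega
    have h₁ := h ⟨k - 1, by omega⟩
    have h₂ := hg k (k + 1) k.le_succ hk
    simp only [show k - 1 + 1 = k by omega, show k - 1 + 2 = k + 1 by omega] at h₁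
    split_ifs at h₁ ⊢ <;> omega

theorem stmt_7_general (n : ℕ) (p : Fin (n + 1) → ℝ) (i : Fin (n + 1)) (c : ℕ → ℝ)
    (hmono : ∀ a b : ℕ, a ≤ b → b ≤ n + 1 → c a ≤ c b)
    (j : ℕ) (hj1 : 1 ≤ j) (hjm : j ≤ n + 1) :
    ((∀ k : Fin (n + 1), orderStat p k ≤ c ((k : ℕ) + 1)) ∧
        c (j - 1) < p i ∧ p i ≤ c j)
      ↔ ((∀ k : Fin n, orderStat (p ∘ i.succAbove) k ≤
            if (k : ℕ) + 1 < j then c ((k : ℕ) + 1) else c ((k : ℕ) + 2)) ∧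
          c (j - 1) < p i ∧ p i ≤ c j) := by
  refine and_congr_left fun ⟨hlo, hhi⟩ => ?_
  have hpi_le_iff (l : ℕ) (hl : l ≤ n + 1) : p i ≤ c l ↔ j ≤ l := by
    refine ⟨fun h => ?_, fun h => hhi.trans (hmono j l h hl)⟩
    by_contra! hlj
    exact (hmono l (j - 1) (by omega) (by omega)).not_gt (hlo.trans_le h)
  have hcount := Nat.forall_lt_add_ite_iff_forall_lt_skip hj1 hjm
    (fun l => #{a | p (i.succAbove a) ≤ c l}) fun a b hab hb => card_le_card fun x hx => by
      simp only [mem_filter, mem_univ, true_and] at hx ⊢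
      exact hx.trans (hmono a b hab hb)
  simp only [orderStat_le_iff, Fin.card_filter_univ_succAbove _ i]
  refine (forall_congr' fun k => ?_).trans (hcount.trans (forall_congr' fun k => ?_))
  · rw [if_congr (hpi_le_iff _ k.isLt) rfl rfl]
  · split_ifs <;> rfl

/-- Pointwise set identity (3.2): for constants 0 = c_0 ≤ c_1 ≤ … ≤ c_m ≤ 1 and
1 ≤ j ≤ m (here m = n+1), the event
{P_{(1)} ≤ c_1, …, P_{(m)} ≤ c_m, c_{j-1} < P_i ≤ c_j} equals the event
{Q_{(l)} ≤ c_l for l ≤ j-1, Q_{(l)} ≤ c_{l+1} for j ≤ l ≤ m-1, c_{j-1} < P_i ≤ c_j},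
where Q are the order statistics of the m−1 values with P_i removed. -/
theorem stmt_7 (n : ℕ) (p : Fin (n + 1) → ℝ) (i : Fin (n + 1)) (c : ℕ → ℝ)
    (hc0 : c 0 = 0) (hmono : ∀ a b : ℕ, a ≤ b → b ≤ n + 1 → c a ≤ c b)
    (hc1 : c (n + 1) ≤ 1)
    (j : ℕ) (hj1 : 1 ≤ j) (hjm : j ≤ n + 1) :
    ((∀ k : Fin (n + 1), orderStat p k ≤ c ((k : ℕ) + 1)) ∧
        c (j - 1) < p i ∧ p i ≤ c j)
      ↔ ((∀ k : Fin n, orderStat (p ∘ i.succAbove) k ≤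
            if (k : ℕ) + 1 < j then c ((k : ℕ) + 1) else c ((k : ℕ) + 2)) ∧
          c (j - 1) < p i ∧ p i ≤ c j) :=
  stmt_7_general n p i c hmono j hj1 hjm
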